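/- arXiv:1709.08529 — 2 statements merged into one kernel-verified Lean document; each statement's English description precedes it below -/
import Mathlib

section
/- Let A be a unital C*-algebra, e ∈ A a partial isometry, x ∈ A₂(e) an element of the Peirce-2 subspace with ‖x‖ ≤ 1, and y ∈ A₀(e) an element of the Peirce-0 subspace with ‖y‖ ≤ 1. Then ‖x + y‖ = max(‖x‖, ‖y‖) ≤ 1. -/
/-! The projections `p = e e*` and `q = e* e` make a Peirce-2 element `x = p a q` and a
Peirce-0 element `y = (1 - p) b (1 - q)` orthogonal on both sides: `x* y = 0 = x y*`.
Hence `(x + y)* (x + y) = x* x + y* y` is a sum of self-adjoint elements with zero product,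
whose norm is the maximum of their norms, and the C*-identity turns this into
`‖x + y‖² = max ‖x‖² ‖y‖²`. -/

section PartialIsometry

variable {R : Type*} [NonUnitalSemiring R] [StarRing R] {e : R}

lemma isStarProjection_mul_star_self_of_mul_star_mul_self (he : e * star e * e = e) :
    IsStarProjection (e * star e) where
  isIdempotentElem := by rw [IsIdempotentElem, ← mul_assoc, he]
  isSelfAdjoint := .mul_star_self e

lemma isStarProjection_star_mul_self_of_mul_star_mul_self (he : e * star e * e = e) :
    IsStarProjection (star e * e) := by
  have he' : star e * star (star e) * star e = star e := by
    simpa only [star_mul, star_star, mul_assoc] using congr(star $he)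
  simpa only [star_star] using isStarProjection_mul_star_self_of_mul_star_mul_self he'

end PartialIsometry

section Peirce

variable {R : Type*} [Ring R] [StarRing R] {p q : R}

lemma star_mul_eq_zero_of_peirce (hp : IsStarProjection p) (hq : IsStarProjection q) (a b : R) :
    star (p * a * q) * ((1 - p) * b * (1 - q)) = 0 := by
  rw [star_mul, star_mul, hp.isSelfAdjoint.star_eq, hq.isSelfAdjoint.star_eq]
  simp only [mul_assoc, ← mul_assoc p (1 - p), hp.mul_one_sub_self, zero_mul, mul_zero]

lemma mul_star_eq_zero_of_peirce (hp : IsStarProjection p) (hq : IsStarProjection q) (a b : R) :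
    p * a * q * star ((1 - p) * b * (1 - q)) = 0 := by
  rw [star_mul, star_mul, hp.one_sub.isSelfAdjoint.star_eq, hq.one_sub.isSelfAdjoint.star_eq]
  simp only [mul_assoc, ← mul_assoc q (1 - q), hq.mul_one_sub_self, zero_mul, mul_zero]

end Peirce

lemma norm_add_eq_max_of_star_mul_eq_zero {A : Type*} [NonUnitalCStarAlgebra A] {x y : A}
    (h₁ : star x * y = 0) (h₂ : x * star y = 0) : ‖x + y‖ = max ‖x‖ ‖y‖ := by
  have h₁' : star y * x = 0 := by simpa only [star_mul, star_star, star_zero] using congr(star $h₁)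
  have hsq : star (x + y) * (x + y) = star x * x + star y * y := by
    rw [star_add, add_mul, mul_add, mul_add, h₁, h₁', add_zero, zero_add]
  have horth : star x * x * (star y * y) = 0 := by
    rw [mul_assoc, ← mul_assoc x, h₂, zero_mul, mul_zero]
  have : ‖x + y‖₊ ^ 2 = max ‖x‖₊ ‖y‖₊ ^ 2 := by
    rw [sq, ← CStarRing.nnnorm_star_mul_self, hsq,
      (IsSelfAdjoint.star_mul_self x).nnnorm_add_eq_max (.star_mul_self y) horth,
      CStarRing.nnnorm_star_mul_self, CStarRing.nnnorm_star_mul_self, ← sq, ← sq]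
    exact (pow_left_mono 2).map_max.symm
  simpa using congr(NNReal.toReal $(pow_left_injective two_ne_zero this))

/-- For a partial isometry `e` in a unital C*-algebra, if `x` belongs to the Peirce-2
subspace and `y` to the Peirce-0 subspace, both of norm at most one, then
`‖x + y‖ = max ‖x‖ ‖y‖ ≤ 1`. -/
theorem norm_add_peirce2_peirce0 {A : Type*} [CStarAlgebra A]
    (e : A) (he : e * star e * e = e) (x y : A)
    (hx : ∃ a : A, x = e * star e * a * (star e * e))
    (hy : ∃ b : A, y = (1 - e * star e) * b * (1 - star e * e))
    (hxn : ‖x‖ ≤ 1) (hyn : ‖y‖ ≤ 1) :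
    ‖x + y‖ = max ‖x‖ ‖y‖ ∧ ‖x + y‖ ≤ 1 := by
  obtain ⟨a, rfl⟩ := hx
  obtain ⟨b, rfl⟩ := hy
  have hp := isStarProjection_mul_star_self_of_mul_star_mul_self he
  have hq := isStarProjection_star_mul_self_of_mul_star_mul_self he
  have hnorm := norm_add_eq_max_of_star_mul_eq_zero
    (star_mul_eq_zero_of_peirce hp hq a b) (mul_star_eq_zero_of_peirce hp hq a b)
  exact ⟨hnorm, hnorm ▸ max_le hxn hyn⟩
end

section
/- Let A be a unital C*-algebra and let v, u be partial isometries in A. Define v ≤ u if and only if u = v + (1 − v v*) u (1 − v* v). Then ≤ is a partial order on the set of partial isometries of A, and v ≤ u implies F_u ⊆ F_v, where F_w = {x ∈ B_A : x w* = w w*}. -/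
/-!
For a partial isometry `v` with final projection `p = v v*` and initial projection `q = v* v`,
the relation `u = v + (1 - p) u (1 - q)` says exactly that `p u = v = u q`, i.e. `v` is the
corner `p u q` of `u`. Reflexivity, antisymmetry, transitivity and the reversal of the faces
are then identities between products of these projections.
-/

section
variable {A : Type*} [Ring A] [StarRing A]

def IsPartialIsometry (v : A) : Prop := v * star v * v = v

def PartialIsometryLE (v u : A) : Prop :=
  u = v + (1 - v * star v) * u * (1 - star v * v)

namespace IsPartialIsometry
variable {v u : A}

theorem mul_star_mul (hv : IsPartialIsometry v) : v * (star v * v) = v := by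
  rw [← mul_assoc]; exact hv

theorem star_mul_mul_star (hv : IsPartialIsometry v) : star v * (v * star v) = star v := by
  simpa only [star_mul, star_star, mul_assoc] using congrArg star hv

theorem partialIsometryLE_iff (hv : IsPartialIsometry v) :
    PartialIsometryLE v u ↔ v * star v * u = v ∧ u * (star v * v) = v := by
  constructor
  · intro h
    have hp : v * star v * (1 - v * star v) = 0 := by
      rw [mul_sub, mul_one, ← mul_assoc, hv, sub_self]
    have hq : (1 - star v * v) * (star v * v) = 0 := by
      rw [sub_mul, one_mul, mul_assoc, hv.mul_star_mul, sub_self]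
    constructor
    · calc v * star v * u
            = v * star v * v + v * star v * (1 - v * star v) * u * (1 - star v * v) := by
              conv_lhs => rw [h]
              noncomm_ring
        _ = v := by rw [hp, hv]; noncomm_ring
    · calc u * (star v * v)
            = v * (star v * v) + (1 - v * star v) * u * ((1 - star v * v) * (star v * v)) := by
              conv_lhs => rw [h]
              noncomm_ring
        _ = v := by rw [hq, hv.mul_star_mul]; noncomm_ring
  · rintro ⟨hl, hr⟩
    calc u = v + u - v * star v * u - u * (star v * v) + v * star v * u * (star v * v) := by
          rw [hl, hr, hv.mul_star_mul]; abel
      _ = v + (1 - v * star v) * u * (1 - star v * v) := by noncomm_ring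

end IsPartialIsometry

namespace PartialIsometryLE
variable {v u w : A}

theorem refl (hv : IsPartialIsometry v) : PartialIsometryLE v v :=
  hv.partialIsometryLE_iff.2 ⟨hv, hv.mul_star_mul⟩

theorem final_proj_mul (hv : IsPartialIsometry v) (h : PartialIsometryLE v u) :
    v * star v * u = v :=
  (hv.partialIsometryLE_iff.1 h).1

theorem mul_initial_proj (hv : IsPartialIsometry v) (h : PartialIsometryLE v u) :
    u * (star v * v) = v :=
  (hv.partialIsometryLE_iff.1 h).2

theorem star_mul_final_proj (hv : IsPartialIsometry v) (h : PartialIsometryLE v u) :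
    star u * (v * star v) = star v := by
  simpa only [star_mul, star_star, mul_assoc] using congrArg star (h.final_proj_mul hv)

theorem mul_star_self_eq (hv : IsPartialIsometry v) (h : PartialIsometryLE v u) :
    u * star v = v * star v := by
  calc u * star v = u * (star v * v) * star v := by rw [mul_assoc, mul_assoc, hv.star_mul_mul_star]
    _ = v * star v := by rw [h.mul_initial_proj hv]

theorem star_self_mul_eq (hv : IsPartialIsometry v) (h : PartialIsometryLE v u) :
    star v * u = star v * v := by
  calc star v * u = star v * (v * star v) * u := by rw [hv.star_mul_mul_star]
    _ = star v * v := by rw [mul_assoc, h.final_proj_mul hv]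

theorem star_mul_self_eq (hv : IsPartialIsometry v) (h : PartialIsometryLE v u) :
    star u * v = star v * v := by
  simpa only [star_mul, star_star] using congrArg star (h.star_self_mul_eq hv)

theorem larger_final_proj_mul (hv : IsPartialIsometry v) (h : PartialIsometryLE v u) :
    u * star u * v = v := by
  rw [mul_assoc, h.star_mul_self_eq hv, h.mul_initial_proj hv]

theorem star_mul_larger_final_proj (hv : IsPartialIsometry v) (h : PartialIsometryLE v u) :
    star v * (u * star u) = star v := by
  simpa only [star_mul, star_star, mul_assoc] using congrArg star (h.larger_final_proj_mul hv)

theorem antisymm (hv : IsPartialIsometry v) (hu : IsPartialIsometry u)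
    (h₁ : PartialIsometryLE v u) (h₂ : PartialIsometryLE u v) : v = u := by
  have hproj : u * star u = v * star v := by
    calc u * star u = v * star u := (h₂.mul_star_self_eq hu).symm
      _ = v * star v := by
        simpa only [star_mul, star_star] using congrArg star (h₁.mul_star_self_eq hv)
  calc v = v * star v * u := (h₁.final_proj_mul hv).symm
    _ = u := by rw [← hproj, hu]

theorem trans (hv : IsPartialIsometry v) (hu : IsPartialIsometry u)
    (h₁ : PartialIsometryLE v u) (h₂ : PartialIsometryLE u w) : PartialIsometryLE v w := by
  refine hv.partialIsometryLE_iff.2 ⟨?_, ?_⟩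
  · calc v * star v * w = v * (star v * (u * star u)) * w := by
          rw [h₁.star_mul_larger_final_proj hv]
      _ = v * star v * (u * star u * w) := by simp only [mul_assoc]
      _ = v * star v * u := by rw [h₂.final_proj_mul hu]
      _ = v := h₁.final_proj_mul hv
  · calc w * (star v * v) = w * (star u * u * (star v * v)) := by
          rw [mul_assoc (star u), h₁.mul_initial_proj hv, h₁.star_mul_self_eq hv]
      _ = w * (star u * u) * (star v * v) := by simp only [mul_assoc]
      _ = u * (star v * v) := by rw [h₂.mul_initial_proj hu]
      _ = v := h₁.mul_initial_proj hv

theorem mul_star_eq_of_mul_star_eq (hv : IsPartialIsometry v) (h : PartialIsometryLE v u) {x : A}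
    (hx : x * star u = u * star u) : x * star v = v * star v := by
  calc x * star v = x * star u * (v * star v) := by rw [mul_assoc, h.star_mul_final_proj hv]
    _ = u * star v := by rw [hx, mul_assoc, h.star_mul_final_proj hv]
    _ = v * star v := h.mul_star_self_eq hv

end PartialIsometryLE
end

/-- The relation `v ≤ u ↔ u = v + (1 - v v*) u (1 - v* v)` is a partial order on the
set of partial isometries of a unital C*-algebra, and it reverses the order of the
associated faces `F_w = {x ∈ B_A : x w* = w w*}`. -/
theorem partial_isometry_order {A : Type*} [CStarAlgebra A]
    (le : A → A → Prop)
    (hle : ∀ v u, le v u ↔ u = v + (1 - v * star v) * u * (1 - star v * v)) :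
    (∀ v : A, v * star v * v = v → le v v) ∧
    (∀ v u : A, v * star v * v = v → u * star u * u = u → le v u → le u v → v = u) ∧
    (∀ v u w : A, v * star v * v = v → u * star u * u = u → w * star w * w = w →
      le v u → le u w → le v w) ∧
    (∀ v u : A, v * star v * v = v → u * star u * u = u → le v u →
      {x : A | ‖x‖ ≤ 1 ∧ x * star u = u * star u} ⊆
        {x : A | ‖x‖ ≤ 1 ∧ x * star v = v * star v}) := by
  have hle' : ∀ v u, le v u ↔ PartialIsometryLE v u := hle
  simp only [hle']
  refine ⟨fun v hv ↦ PartialIsometryLE.refl hv,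
    fun v u hv hu h₁ h₂ ↦ h₁.antisymm hv hu h₂,
    fun v u w hv hu _ h₁ h₂ ↦ h₁.trans hv hu h₂, ?_⟩
  rintro v u hv - h x ⟨hx_norm, hx⟩
  exact ⟨hx_norm, h.mul_star_eq_of_mul_star_eq hv hx⟩
end
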